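/- (Mollifier with vanishing moments) For every positive integer L there exists a smooth function φ̃ ∈ C^∞(ℝ; ℝ) with support contained in [−1, 1] such that ∫_ℝ φ̃(x) dx = 1 and ∫_ℝ φ̃(x) xⁿ dx = 0 for every n = 1, 2, …, L. -/

import Mathlib

open Set MeasureTheory

open Polynomial

/-!
Dilating a bump `g` supported in `[-1, 1]` to width `c ∈ (0, 1]` keeps it supported in `[-1, 1]`
and multiplies its `n`-th moment by `cⁿ`. Hence a combination `∑ aᵢ · dilate cᵢ g` over distinct
widths has `n`-th moment `(∑ aᵢ cᵢⁿ) · ∫ g(y) yⁿ dy`. Taking for `aᵢ` the Lagrange basis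
polynomials on the nodes `cᵢ`, evaluated at `0`, gives `∑ aᵢ cᵢⁿ = 0ⁿ` for every `n` below the
number of nodes, since Lagrange interpolation reproduces `Xⁿ`.
-/

namespace Lagrange

variable {F ι : Type*} [Field F] [DecidableEq ι] {s : Finset ι} {v : ι → F}

theorem sum_eval_basis_mul_pow (hvs : Set.InjOn v s) {n : ℕ} (hn : n < s.card) (x : F) :
    ∑ i ∈ s, (Lagrange.basis s v i).eval x * v i ^ n = x ^ n := by
  have hdeg : (X ^ n : F[X]).degree < s.card := by
    rw [degree_X_pow]; exact_mod_cast hn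
  conv_rhs => rw [← eval_X_pow (x := x) (n := n), eq_interpolate hvs hdeg]
  simp [interpolate_apply, eval_finsetSum, mul_comm]

end Lagrange

noncomputable def dilate (c : ℝ) (g : ℝ → ℝ) (x : ℝ) : ℝ := c⁻¹ * g (x / c)

section Dilate

variable {c : ℝ} {g : ℝ → ℝ}

theorem contDiff_dilate {n : WithTop ℕ∞} (hg : ContDiff ℝ n g) : ContDiff ℝ n (dilate c g) :=
  contDiff_const.mul (hg.comp (contDiff_id.div_const c))

theorem support_dilate_subset_Icc (hg : Function.support g ⊆ Icc (-1) 1) (hc₀ : 0 < c)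
    (hc₁ : c ≤ 1) : Function.support (dilate c g) ⊆ Icc (-1) 1 := by
  intro x hx
  have hxc : x / c ∈ Icc (-1) 1 := hg (right_ne_zero_of_mul hx)
  rw [mem_Icc, le_div_iff₀ hc₀, div_le_iff₀ hc₀] at hxc
  constructor <;> nlinarith [hxc.1, hxc.2]

theorem dilate_mul_pow (hc : c ≠ 0) (n : ℕ) (x : ℝ) :
    dilate c g x * x ^ n = c ^ n * (c⁻¹ * (g (x / c) * (x / c) ^ n)) := by
  unfold dilate
  rw [div_pow]
  field_simp

theorem integrable_dilate_mul_pow (hc : c ≠ 0) {n : ℕ}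
    (hg : Integrable (fun y ↦ g y * y ^ n)) : Integrable (fun x ↦ dilate c g x * x ^ n) := by
  simp_rw [dilate_mul_pow hc]
  exact ((hg.comp_div hc).const_mul _).const_mul _

theorem integral_dilate_mul_pow (hc : 0 < c) (n : ℕ) :
    ∫ x, dilate c g x * x ^ n = c ^ n * ∫ y, g y * y ^ n := by
  simp_rw [dilate_mul_pow hc.ne']
  rw [integral_const_mul, integral_const_mul,
    Measure.integral_comp_div (fun y ↦ g y * y ^ n), abs_of_pos hc, smul_eq_mul,
    inv_mul_cancel_left₀ hc.ne']

end Dilate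

noncomputable def lagrangeDilateSum {ι : Type*} [DecidableEq ι] (s : Finset ι) (c : ι → ℝ)
    (g : ℝ → ℝ) (x : ℝ) : ℝ :=
  ∑ i ∈ s, (Lagrange.basis s c i).eval 0 * dilate (c i) g x

section LagrangeDilateSum

variable {ι : Type*} [DecidableEq ι] {s : Finset ι} {c : ι → ℝ} {g : ℝ → ℝ}

theorem contDiff_lagrangeDilateSum {n : WithTop ℕ∞} (hg : ContDiff ℝ n g) :
    ContDiff ℝ n (lagrangeDilateSum s c g) := by
  unfold lagrangeDilateSum
  exact ContDiff.sum fun i _ ↦ contDiff_const.mul (contDiff_dilate hg)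

theorem support_lagrangeDilateSum_subset_Icc (hg : Function.support g ⊆ Icc (-1) 1)
    (hc : ∀ i ∈ s, 0 < c i ∧ c i ≤ 1) :
    Function.support (lagrangeDilateSum s c g) ⊆ Icc (-1) 1 := by
  rw [Function.support_subset_iff']
  intro x hx
  refine Finset.sum_eq_zero fun i hi ↦ ?_
  rw [Function.support_subset_iff'.mp
    (support_dilate_subset_Icc hg (hc i hi).1 (hc i hi).2) x hx, mul_zero]

theorem integral_lagrangeDilateSum_mul_pow (hc : ∀ i ∈ s, 0 < c i) (hcs : Set.InjOn c s)
    {n : ℕ} (hn : n < s.card) (hg : Integrable (fun y ↦ g y * y ^ n)) :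
    ∫ x, lagrangeDilateSum s c g x * x ^ n = 0 ^ n * ∫ y, g y * y ^ n := by
  simp_rw [lagrangeDilateSum, Finset.sum_mul, mul_assoc]
  rw [integral_finsetSum _ fun i hi ↦
    (integrable_dilate_mul_pow (hc i hi).ne' hg).const_mul _]
  simp_rw [integral_const_mul]
  rw [← Lagrange.sum_eval_basis_mul_pow hcs hn 0, Finset.sum_mul]
  refine Finset.sum_congr rfl fun i hi ↦ ?_
  rw [integral_dilate_mul_pow (hc i hi), mul_assoc]

end LagrangeDilateSum

theorem statement_16_general (L : ℕ) :
    ∃ φ : ℝ → ℝ,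
      ContDiff ℝ (⊤ : ℕ∞) φ ∧
      tsupport φ ⊆ Icc (-1:ℝ) 1 ∧
      (∫ x : ℝ, φ x) = 1 ∧
      ∀ n : ℕ, 1 ≤ n → n ≤ L → (∫ x : ℝ, φ x * x ^ n) = 0 := by
  let bump : ContDiffBump (0 : ℝ) := ⟨1 / 2, 1, by norm_num, by norm_num⟩
  set g := bump.normed volume
  have hg_supp : Function.support g ⊆ Icc (-1) 1 := by
    rw [bump.support_normed_eq, Real.ball_eq_Ioo]
    exact Ioo_subset_Icc_self.trans (by norm_num)
  have hg_mom (n : ℕ) : Integrable (fun y ↦ g y * y ^ n) :=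
    (bump.continuous_normed.mul (continuous_pow n)).integrable_of_hasCompactSupport
      bump.hasCompactSupport_normed.mul_right
  set c : ℕ → ℝ := fun j ↦ ((j : ℝ) + 1)⁻¹
  have hc_pos (j : ℕ) : 0 < c j := by positivity
  have hc_le (j : ℕ) : c j ≤ 1 := inv_le_one_of_one_le₀ (by simp)
  have hc_inj : Set.InjOn c (Finset.range (L + 1)) := fun i _ j _ h ↦ by
    simpa [c] using h
  have hmom {n : ℕ} (hn : n ≤ L) := integral_lagrangeDilateSum_mul_pow
    (fun j _ ↦ hc_pos j) hc_inj (by simpa [Nat.lt_succ_iff] using hn) (hg_mom n)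
  refine ⟨lagrangeDilateSum (Finset.range (L + 1)) c g,
    contDiff_lagrangeDilateSum bump.contDiff_normed,
    closure_minimal (support_lagrangeDilateSum_subset_Icc hg_supp fun j _ ↦ ⟨hc_pos j, hc_le j⟩)
      isClosed_Icc, ?_, fun n hn₁ hn₂ ↦ ?_⟩
  · simpa [g, bump.integral_normed] using hmom (Nat.zero_le L)
  · rw [hmom hn₂, zero_pow (by omega), zero_mul]

/-- **Mollifier with vanishing moments.** For every positive integer `L` there
is a smooth function `φ̃ : ℝ → ℝ` supported in `[−1,1]` with `∫ φ̃ = 1` and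
`∫ φ̃(x) xⁿ dx = 0` for `n = 1, …, L`. -/
theorem statement_16 (L : ℕ) (hL : 0 < L) :
    ∃ φ : ℝ → ℝ,
      ContDiff ℝ (⊤ : ℕ∞) φ ∧
      tsupport φ ⊆ Icc (-1:ℝ) 1 ∧
      (∫ x : ℝ, φ x) = 1 ∧
      ∀ n : ℕ, 1 ≤ n → n ≤ L → (∫ x : ℝ, φ x * x ^ n) = 0 :=
  statement_16_general L
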